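/- arXiv:2207.08886 — 5 statements merged into one kernel-verified Lean document; each statement's English description precedes it below -/
import Mathlib

section
/- Let p ≥ 1, let G₁ and G₂ be symmetric positive definite p×p real matrices, let σ² > 0, n > 0 be real numbers, and let δ ∈ ℝᵖ. For λ ≥ 0 define MSE(λ) = (σ²/n)·trace(S(λ)⁻²G₂) + λ²·δᵀG₁S(λ)⁻²G₁δ, where S(λ) = G₂ + λG₁. Then there exists ε > 0 such that MSE(λ) < MSE(0) for every λ ∈ (0, ε); note MSE(0) = (σ²/n)·trace(G₂⁻¹). -/
/-!
At `λ = 0` the variance term `(σ²/n)·tr(S(λ)⁻² G₂)` has derivative `-2 (σ²/n) tr(G₂⁻¹ G₁ G₂⁻¹)`,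
which is negative because `G₂⁻¹ G₁ G₂⁻¹` is positive definite, while the bias term is `λ²` times a
function continuous at `0`, so it contributes nothing to the derivative. A function with negative
derivative at `0` lies strictly below its value at `0` on some interval `(0, ε)`.
-/

open Matrix Filter Topology Set

theorem HasDerivWithinAt.eventually_lt_of_deriv_neg {f : ℝ → ℝ} {f' x : ℝ}
    (hf : HasDerivWithinAt f f' (Ioi x) x) (hf' : f' < 0) : ∀ᶠ y in 𝓝[>] x, f y < f x := by
  have hslope : Tendsto (slope f x) (𝓝[>] x) (𝓝 f') :=
    (hasDerivWithinAt_iff_tendsto_slope' (lt_irrefl x)).mp hf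
  filter_upwards [hslope.eventually_lt_const hf', self_mem_nhdsWithin] with y hy hxy
  rw [slope_def_field, div_neg_iff] at hy
  rcases hy with ⟨-, h⟩ | ⟨h, -⟩ <;> linarith [mem_Ioi.mp hxy]

theorem hasDerivAt_sq_mul_of_continuousAt {𝕜 : Type*} [NontriviallyNormedField 𝕜] {g : 𝕜 → 𝕜}
    (hg : ContinuousAt g 0) : HasDerivAt (fun t => t ^ 2 * g t) 0 0 := by
  rw [hasDerivAt_iff_tendsto_slope_zero]
  have hlim : Tendsto (fun t => t * g t) (𝓝[≠] 0) (𝓝 0) := by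
    simpa using (tendsto_id.mul hg).mono_left (nhdsWithin_le_nhds (s := {0}ᶜ))
  refine hlim.congr' ?_
  filter_upwards [self_mem_nhdsWithin] with t (ht : t ≠ 0)
  simp only [zero_add, smul_eq_mul, ne_eq, two_ne_zero, not_false_eq_true, zero_pow, zero_mul,
    sub_zero]
  field_simp

theorem Matrix.PosDef.inv_mul_mul_inv {K ι : Type*} [Field K] [PartialOrder K] [StarRing K]
    [Fintype ι] [DecidableEq ι] {A B : Matrix ι ι K} (hA : A.PosDef) (hB : B.PosDef) :
    (A⁻¹ * B * A⁻¹).PosDef := by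
  simpa [hA.inv.1.eq] using
    hB.conjTranspose_mul_mul_same (mulVec_injective_iff_isUnit.mpr hA.inv.isUnit)

-- Any norm would do: the statements below only involve the (canonical) topology on matrices.
attribute [local instance] Matrix.linftyOpNormedRing Matrix.linftyOpNormedAlgebra

section MatrixCalculus

variable {𝕜 ι : Type*} [RCLike 𝕜] [Fintype ι] [DecidableEq ι]

theorem HasDerivAt.matrix_inv {f : 𝕜 → Matrix ι ι 𝕜} {f' : Matrix ι ι 𝕜} {x : 𝕜}
    (hf : HasDerivAt f f' x) (hx : IsUnit (f x).det) :
    HasDerivAt (fun t => (f t)⁻¹) (-((f x)⁻¹ * f' * (f x)⁻¹)) x := by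
  obtain ⟨u, hu⟩ := (isUnit_iff_isUnit_det _).mpr hx
  have hinv : ((u⁻¹ : (Matrix ι ι 𝕜)ˣ) : Matrix ι ι 𝕜) = (f x)⁻¹ := by
    rw [nonsing_inv_eq_ringInverse, ← hu, Ring.inverse_unit]
  have hderiv : HasFDerivAt (Ring.inverse : Matrix ι ι 𝕜 → Matrix ι ι 𝕜)
      (-ContinuousLinearMap.mulLeftRight 𝕜 _ ↑u⁻¹ ↑u⁻¹) (f x) := hu ▸ hasFDerivAt_ringInverse u
  have := hderiv.comp_hasDerivAt x hf
  simp only [Function.comp_def, ← nonsing_inv_eq_ringInverse, hinv] at this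
  exact this

variable {A B : Matrix ι ι 𝕜}

theorem hasDerivAt_inv_add_smul (hA : IsUnit A.det) :
    HasDerivAt (fun t : 𝕜 => (A + t • B)⁻¹) (-(A⁻¹ * B * A⁻¹)) 0 := by
  have hpencil : HasDerivAt (fun t : 𝕜 => A + t • B) B 0 :=
    (((hasDerivAt_id' 0).smul_const B).const_add A).congr_deriv (one_smul 𝕜 B)
  simpa using hpencil.matrix_inv (by simpa using hA)

theorem hasDerivAt_trace_inv_add_smul_sq_mul (hA : IsUnit A.det) :
    HasDerivAt (fun t : 𝕜 => trace ((A + t • B)⁻¹ * (A + t • B)⁻¹ * A))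
      (-2 * trace (A⁻¹ * B * A⁻¹)) 0 := by
  have hinv := hasDerivAt_inv_add_smul (B := B) hA
  have hprod := (hinv.mul hinv).mul_const A
  simp only [zero_smul, add_zero] at hprod
  have htrace : HasDerivAt (fun t : 𝕜 => trace ((A + t • B)⁻¹ * (A + t • B)⁻¹ * A))
      (trace ((-(A⁻¹ * B * A⁻¹) * A⁻¹ + A⁻¹ * -(A⁻¹ * B * A⁻¹)) * A)) 0 :=
    (traceLinearMap ι 𝕜 𝕜).toContinuousLinearMap.hasFDerivAt.comp_hasDerivAt 0 hprod
  refine htrace.congr_deriv ?_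
  rw [add_mul, trace_add, Matrix.mul_assoc _ A⁻¹ A, nonsing_inv_mul A hA, Matrix.mul_one,
    trace_mul_cycle A⁻¹, mul_nonsing_inv A hA, Matrix.one_mul, trace_neg]
  ring

end MatrixCalculus

/-- Theorem 1 (Gaussian linear model, deterministic core): there is a range `(0, ε)` of the
dial parameter `λ` on which the mean squared error of the information-shrinkage estimator,
`MSE(λ) = (σ²/n)·trace(S(λ)⁻² G₂) + λ²·δᵀ G₁ S(λ)⁻² G₁ δ` with `S(λ) = G₂ + λ G₁` and
`M⁻² = (M⁻¹)ᵀ M⁻¹`, is strictly smaller than `MSE(0) = (σ²/n)·trace(G₂⁻¹)`. -/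
theorem mse_lt_mse_zero_of_small_lambda
    (p : ℕ) (hp : 1 ≤ p) (G₁ G₂ : Matrix (Fin p) (Fin p) ℝ)
    (hG₁ : G₁.PosDef) (hG₂ : G₂.PosDef)
    (σ2 n : ℝ) (hσ2 : 0 < σ2) (hn : 0 < n) (δ : Fin p → ℝ)
    (S : ℝ → Matrix (Fin p) (Fin p) ℝ) (hS : ∀ l : ℝ, S l = G₂ + l • G₁)
    (MSE : ℝ → ℝ)
    (hMSE : ∀ l : ℝ, MSE l =
      σ2 / n * Matrix.trace (((S l)⁻¹)ᵀ * (S l)⁻¹ * G₂)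
        + l ^ 2 * (δ ⬝ᵥ ((G₁ * ((S l)⁻¹)ᵀ * (S l)⁻¹ * G₁) *ᵥ δ))) :
    (∃ ε > 0, ∀ l : ℝ, 0 < l → l < ε → MSE l < MSE 0) ∧
      MSE 0 = σ2 / n * Matrix.trace G₂⁻¹ := by
  have hdet : IsUnit G₂.det := hG₂.det_pos.ne'.isUnit
  have hsymm (l : ℝ) : ((S l)⁻¹)ᵀ = (S l)⁻¹ := by
    rw [hS]
    exact (isHermitian_iff_isSymm.mp (hG₂.1.add (hG₁.1.smul (IsSelfAdjoint.all l))).inv).eq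
  have hMSE' : MSE = fun l => σ2 / n * trace ((G₂ + l • G₁)⁻¹ * (G₂ + l • G₁)⁻¹ * G₂)
      + l ^ 2 * (δ ⬝ᵥ ((G₁ * (G₂ + l • G₁)⁻¹ * (G₂ + l • G₁)⁻¹ * G₁) *ᵥ δ)) := by
    funext l
    rw [hMSE, hsymm, hS]
  have hbias : ContinuousAt
      (fun l : ℝ => δ ⬝ᵥ ((G₁ * (G₂ + l • G₁)⁻¹ * (G₂ + l • G₁)⁻¹ * G₁) *ᵥ δ)) 0 := by
    have hinv := (hasDerivAt_inv_add_smul (B := G₁) hdet).continuousAt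
    fun_prop
  have hderiv : HasDerivAt MSE (σ2 / n * (-2 * trace (G₂⁻¹ * G₁ * G₂⁻¹))) 0 := by
    rw [hMSE']
    exact (((hasDerivAt_trace_inv_add_smul_sq_mul hdet).const_mul (σ2 / n)).fun_add
      (hasDerivAt_sq_mul_of_continuousAt hbias)).congr_deriv (add_zero _)
  have htrace : 0 < trace (G₂⁻¹ * G₁ * G₂⁻¹) :=
    have : Nonempty (Fin p) := ⟨⟨0, hp⟩⟩
    (hG₂.inv_mul_mul_inv hG₁).trace_pos
  have hneg : σ2 / n * (-2 * trace (G₂⁻¹ * G₁ * G₂⁻¹)) < 0 :=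
    mul_neg_of_pos_of_neg (div_pos hσ2 hn) (by linarith)
  refine ⟨?_, ?_⟩
  · obtain ⟨ε, hε, hdecr⟩ := mem_nhdsGT_iff_exists_Ioo_subset.mp
      (hderiv.hasDerivWithinAt.eventually_lt_of_deriv_neg hneg)
    exact ⟨ε, hε, fun l hl hlε => hdecr ⟨hl, hlε⟩⟩
  · simp only [hMSE', zero_smul, add_zero, Matrix.mul_assoc, nonsing_inv_mul G₂ hdet,
      Matrix.mul_one]
    ring
end

section
/- Let (Ω, ℱ, P) be a probability space and let ε : Ω → ℝⁿ² (n₂ ≥ 1) be a random vector whose components εᵢ and all products εᵢεⱼ are integrable, with E[εᵢ] = 0 for all i and E[εᵢεⱼ] = σ²·𝟙{i = j} for some σ² > 0. Let X₂ be a p×n₂ real matrix with X₂X₂ᵀ invertible, let X₁ be a p×n₁ real matrix, set G₂ = n₂⁻¹X₂X₂ᵀ and G₁ = n₁⁻¹X₁X₁ᵀ, and fix β₂, β̂₁ ∈ ℝᵖ and λ ≥ 0 with S(λ) = G₂ + λG₁ invertible. Define the random vector y = X₂ᵀβ₂ + ε and the estimator β̃(λ) = S(λ)⁻¹(n₂⁻¹X₂y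 + λG₁β̂₁), and set δ = β₂ − β̂₁. Then E[‖β̃(λ) − β₂‖²] = (σ²/n₂)·trace(S(λ)⁻²G₂) + λ²·δᵀG₁S(λ)⁻²G₁δ, where ‖·‖ is the Euclidean norm on ℝᵖ. -/
open Matrix MeasureTheory

/-- MSE decomposition (proof of Theorem 1): for the Gaussian-type linear model
`y = X₂ᵀβ₂ + ε` with mean-zero noise of covariance `σ²I`, the information-shrinkage estimator
`β̃(λ) = S(λ)⁻¹(n₂⁻¹X₂y + λG₁β̂₁)` satisfies
`E‖β̃(λ) − β₂‖² = (σ²/n₂)·trace(S(λ)⁻²G₂) + λ²·δᵀG₁S(λ)⁻²G₁δ`,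
where `S(λ) = G₂ + λG₁`, `δ = β₂ − β̂₁` and `M⁻² = (M⁻¹)ᵀM⁻¹`. -/
theorem shrinkage_estimator_mse_decomposition
    {Ω : Type*} [MeasurableSpace Ω] (P : Measure Ω) [IsProbabilityMeasure P]
    (p n₁ n₂ : ℕ) (hn₂ : 1 ≤ n₂)
    (ε : Ω → Fin n₂ → ℝ) (σ2 : ℝ) (hσ2 : 0 < σ2)
    (hInt : ∀ i, Integrable (fun ω => ε ω i) P)
    (hInt2 : ∀ i j, Integrable (fun ω => ε ω i * ε ω j) P)
    (hmean : ∀ i, ∫ ω, ε ω i ∂P = 0)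
    (hcov : ∀ i j, ∫ ω, ε ω i * ε ω j ∂P = if i = j then σ2 else 0)
    (X₂ : Matrix (Fin p) (Fin n₂) ℝ) (hX₂ : IsUnit (X₂ * X₂ᵀ))
    (X₁ : Matrix (Fin p) (Fin n₁) ℝ)
    (G₂ G₁ : Matrix (Fin p) (Fin p) ℝ)
    (hG₂ : G₂ = ((n₂ : ℝ)⁻¹) • (X₂ * X₂ᵀ))
    (hG₁ : G₁ = ((n₁ : ℝ)⁻¹) • (X₁ * X₁ᵀ))
    (β₂ βh₁ : Fin p → ℝ) (lam : ℝ) (hlam : 0 ≤ lam)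
    (S : Matrix (Fin p) (Fin p) ℝ) (hS : S = G₂ + lam • G₁) (hSinv : IsUnit S)
    (y : Ω → Fin n₂ → ℝ) (hy : ∀ ω, y ω = X₂ᵀ *ᵥ β₂ + ε ω)
    (βt : Ω → Fin p → ℝ)
    (hβt : ∀ ω, βt ω = S⁻¹ *ᵥ (((n₂ : ℝ)⁻¹) • (X₂ *ᵥ y ω) + lam • (G₁ *ᵥ βh₁)))
    (δ : Fin p → ℝ) (hδ : δ = β₂ - βh₁) :
    ∫ ω, (∑ i : Fin p, (βt ω i - β₂ i) ^ 2) ∂P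
      = σ2 / (n₂ : ℝ) * Matrix.trace ((S⁻¹)ᵀ * S⁻¹ * G₂)
        + lam ^ 2 * (δ ⬝ᵥ ((G₁ * (S⁻¹)ᵀ * S⁻¹ * G₁) *ᵥ δ)) := by
  have hn₂' : (n₂ : ℝ) ≠ 0 := by positivity
  have hdet := (Matrix.isUnit_iff_isUnit_det S).mp hSinv
  have hSS : S⁻¹ * S = 1 := Matrix.nonsing_inv_mul S hdet
  set A : Matrix (Fin p) (Fin n₂) ℝ := ((n₂ : ℝ)⁻¹) • (S⁻¹ * X₂) with hA
  set b : Fin p → ℝ := -(lam • ((S⁻¹ * G₁) *ᵥ δ)) with hb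
  -- key decomposition
  have key : ∀ ω, βt ω - β₂ = A *ᵥ ε ω + b := by
    intro ω
    have hβ : β₂ = S⁻¹ *ᵥ (S *ᵥ β₂) := by
      rw [Matrix.mulVec_mulVec, hSS, Matrix.one_mulVec]
    have step1 : βt ω - β₂
        = S⁻¹ *ᵥ (((n₂ : ℝ)⁻¹) • (X₂ *ᵥ y ω) + lam • (G₁ *ᵥ βh₁) - S *ᵥ β₂) := by
      rw [hβt, Matrix.mulVec_sub]; rw [← hβ]
    have step2 : ((n₂ : ℝ)⁻¹) • (X₂ *ᵥ y ω) + lam • (G₁ *ᵥ βh₁) - S *ᵥ β₂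
        = ((n₂ : ℝ)⁻¹) • (X₂ *ᵥ ε ω) - lam • (G₁ *ᵥ δ) := by
      rw [hy, hδ, hS, Matrix.mulVec_add, Matrix.add_mulVec, Matrix.smul_mulVec,
        Matrix.mulVec_sub, hG₂, Matrix.smul_mulVec, Matrix.mulVec_mulVec]
      module
    rw [step1, step2, Matrix.mulVec_sub, Matrix.mulVec_smul, Matrix.mulVec_smul, hA, hb,
      Matrix.smul_mulVec, Matrix.mulVec_mulVec, Matrix.mulVec_mulVec, sub_eq_add_neg]
  -- pointwise expansion
  have happ : ∀ ω i, βt ω i - β₂ i = (∑ k, A i k * ε ω k) + b i := by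
    intro ω i
    have := congrFun (key ω) i
    simpa [Matrix.mulVec, dotProduct] using this
  have expand : ∀ i ω, ((∑ k, A i k * ε ω k) + b i) ^ 2
      = (∑ k, ∑ l, (A i k * A i l) * (ε ω k * ε ω l))
        + ((∑ k, (2 * b i * A i k) * ε ω k) + b i ^ 2) := by
    intro i ω
    have h1 : (∑ k, A i k * ε ω k) ^ 2
        = ∑ k, ∑ l, (A i k * A i l) * (ε ω k * ε ω l) := by
      rw [sq, Finset.sum_mul_sum]
      exact Finset.sum_congr rfl fun k _ => Finset.sum_congr rfl fun l _ => by ring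
    have h2 : 2 * (∑ k, A i k * ε ω k) * b i = ∑ k, (2 * b i * A i k) * ε ω k := by
      rw [Finset.mul_sum, Finset.sum_mul]
      exact Finset.sum_congr rfl fun k _ => by ring
    rw [add_sq, h1, h2]; ring
  have hIntQ : ∀ i, Integrable (fun ω => (∑ k, ∑ l, (A i k * A i l) * (ε ω k * ε ω l))) P :=
    fun i => integrable_finset_sum _ fun k _ => integrable_finset_sum _ fun l _ =>
      (hInt2 k l).const_mul _
  have hIntL : ∀ i, Integrable (fun ω => (∑ k, (2 * b i * A i k) * ε ω k) + b i ^ 2) P :=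
    fun i => ((integrable_finset_sum _ fun k _ => (hInt k).const_mul _).add
      (integrable_const _))
  have hIntF : ∀ i, Integrable (fun ω => (βt ω i - β₂ i) ^ 2) P := by
    intro i
    have : (fun ω => (βt ω i - β₂ i) ^ 2)
        = fun ω => (∑ k, ∑ l, (A i k * A i l) * (ε ω k * ε ω l))
            + ((∑ k, (2 * b i * A i k) * ε ω k) + b i ^ 2) := by
      funext ω; rw [happ, expand]
    rw [this]
    exact (hIntQ i).add (hIntL i)
  -- compute each integral
  have hint_i : ∀ i, ∫ ω, (βt ω i - β₂ i) ^ 2 ∂P = σ2 * (∑ k, A i k ^ 2) + b i ^ 2 := by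
    intro i
    have hrw : (fun ω => (βt ω i - β₂ i) ^ 2)
        = fun ω => (∑ k, ∑ l, (A i k * A i l) * (ε ω k * ε ω l))
            + ((∑ k, (2 * b i * A i k) * ε ω k) + b i ^ 2) := by
      funext ω; rw [happ, expand]
    have hQ : ∫ ω, (∑ k, ∑ l, (A i k * A i l) * (ε ω k * ε ω l)) ∂P
        = σ2 * ∑ k, A i k ^ 2 := by
      rw [integral_finset_sum _ (fun k _ => integrable_finset_sum _ fun l _ =>
        (hInt2 k l).const_mul _), Finset.mul_sum]
      refine Finset.sum_congr rfl fun k _ => ?_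
      rw [integral_finset_sum _ (fun l _ => (hInt2 k l).const_mul _)]
      simp only [integral_const_mul, hcov, mul_ite, mul_zero]
      rw [Finset.sum_ite_eq Finset.univ k]
      simp [sq]; ring
    have hL : ∫ ω, ((∑ k, (2 * b i * A i k) * ε ω k) + b i ^ 2) ∂P = b i ^ 2 := by
      rw [integral_add (integrable_finset_sum _ fun k _ => (hInt k).const_mul _)
        (integrable_const _),
        integral_finset_sum _ (fun k _ => (hInt k).const_mul _)]
      simp [integral_const_mul, hmean]
    rw [hrw, integral_add (hIntQ i) (hIntL i), hQ, hL]
  rw [integral_finset_sum _ (fun i _ => hIntF i)]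
  simp only [hint_i]
  rw [Finset.sum_add_distrib, ← Finset.mul_sum]
  congr 1
  · -- variance term
    have h1 : ∑ i, ∑ k, A i k ^ 2 = Matrix.trace (A * Aᵀ) := by
      simp [Matrix.trace, Matrix.mul_apply, Matrix.diag, sq]
    have h2 : Matrix.trace (A * Aᵀ) = (n₂ : ℝ)⁻¹ * Matrix.trace ((S⁻¹)ᵀ * S⁻¹ * G₂) := by
      have hX : X₂ * X₂ᵀ = (n₂ : ℝ) • G₂ := by
        rw [hG₂, smul_smul, mul_inv_cancel₀ hn₂', one_smul]
      rw [hA, Matrix.transpose_smul, Matrix.smul_mul, Matrix.mul_smul, smul_smul,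
        Matrix.transpose_mul, Matrix.trace_smul]
      rw [show S⁻¹ * X₂ * (X₂ᵀ * (S⁻¹)ᵀ) = S⁻¹ * (X₂ * X₂ᵀ) * (S⁻¹)ᵀ by
        simp [Matrix.mul_assoc], hX]
      rw [Matrix.mul_smul, Matrix.smul_mul, Matrix.trace_smul, smul_smul,
        smul_eq_mul]
      rw [Matrix.trace_mul_comm, ← Matrix.mul_assoc]
      have : (n₂ : ℝ)⁻¹ * (n₂ : ℝ)⁻¹ * (n₂ : ℝ) = (n₂ : ℝ)⁻¹ := by field_simp
      rw [this]
    rw [h1, h2]; ring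
  · -- bias term
    have hG₁sym : G₁ᵀ = G₁ := by
      rw [hG₁, Matrix.transpose_smul, Matrix.transpose_mul, Matrix.transpose_transpose]
    have hbb : ∑ i, b i ^ 2 = lam ^ 2 * (((S⁻¹ * G₁) *ᵥ δ) ⬝ᵥ ((S⁻¹ * G₁) *ᵥ δ)) := by
      rw [hb]
      simp only [Pi.neg_apply, Pi.smul_apply, smul_eq_mul, neg_mul, neg_neg,
        dotProduct, Finset.mul_sum]
      refine Finset.sum_congr rfl fun i _ => by ring
    have hM : G₁ * (S⁻¹)ᵀ * S⁻¹ * G₁ = (S⁻¹ * G₁)ᵀ * (S⁻¹ * G₁) := by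
      rw [Matrix.transpose_mul, hG₁sym, Matrix.mul_assoc, ← Matrix.mul_assoc (G₁ * (S⁻¹)ᵀ),
        Matrix.mul_assoc G₁]
    have hdot : ∀ (M : Matrix (Fin p) (Fin p) ℝ) (v : Fin p → ℝ),
        v ⬝ᵥ ((Mᵀ * M) *ᵥ v) = (M *ᵥ v) ⬝ᵥ (M *ᵥ v) := by
      intro M v
      rw [← Matrix.mulVec_mulVec, Matrix.dotProduct_mulVec, Matrix.vecMul_transpose]
    rw [hbb, hM, hdot]
end

section
/- Let p ≥ 1 and let G₁ and G₂ be symmetric positive definite p×p real matrices. Then the variance function v(λ) = trace((G₂ + λG₁)⁻²G₂) is strictly decreasing on [0, ∞): for all 0 ≤ λ₁ < λ₂ one has trace((G₂ + λ₂G₁)⁻²G₂) < trace((G₂ + λ₁G₁)⁻²G₂). -/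
/-!
Factor `G₂ = Rᴴ R` and put `H = R⁻ᴴ G₁ R⁻¹`, so that `G₂ + λ G₁ = Rᴴ (1 + λ H) R`. Cycling the
trace gives `v(λ) = tr((1 + λ H)⁻² (R Rᴴ)⁻¹)`, and the matrices `1 + λ H` all commute. For
`λ₁ < λ₂` the difference `(1 + λ₁ H)⁻² - (1 + λ₂ H)⁻²` is the congruence of the positive definite
`(1 + λ₂ H)² - (1 + λ₁ H)²` by the Hermitian matrix `((1 + λ₁ H) (1 + λ₂ H))⁻¹`, hence positive
definite, and the trace of a product of two positive definite matrices is positive.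
-/

open Matrix

open scoped ComplexOrder

namespace Matrix

variable {n : Type*} [Fintype n] [DecidableEq n]

section CommRing

variable {R : Type*} [CommRing R]

theorem trace_inv_mul_inv_mul_of_conj {P Q : Matrix n n R} (T : Matrix n n R)
    (hP : IsUnit P) (hQ : IsUnit Q) :
    trace ((P * T * Q)⁻¹ * (P * T * Q)⁻¹ * (P * Q)) = trace (T⁻¹ * T⁻¹ * (Q * P)⁻¹) := by
  have hP' := (isUnit_iff_isUnit_det P).mp hP
  have hQ' := (isUnit_iff_isUnit_det Q).mp hQ
  calc trace ((P * T * Q)⁻¹ * (P * T * Q)⁻¹ * (P * Q))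
      = trace (Q⁻¹ * (T⁻¹ * P⁻¹ * Q⁻¹ * T⁻¹) * Q) := by
        simp only [mul_inv_rev, Matrix.mul_assoc, nonsing_inv_mul_cancel_left _ _ hP']
    _ = trace (T⁻¹ * (P⁻¹ * Q⁻¹) * T⁻¹) := by
        rw [trace_mul_cycle, mul_nonsing_inv _ hQ', Matrix.one_mul, Matrix.mul_assoc T⁻¹]
    _ = trace (T⁻¹ * T⁻¹ * (Q * P)⁻¹) := by
        rw [trace_mul_cycle, mul_inv_rev]

theorem inv_mul_sub_mul_inv_of_commute {A B : Matrix n n R} (hA : IsUnit A) (hB : IsUnit B)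
    (hAB : Commute A B) :
    (A * B)⁻¹ * (B * B - A * A) * (A * B)⁻¹ = A⁻¹ * A⁻¹ - B⁻¹ * B⁻¹ := by
  have hA' := (isUnit_iff_isUnit_det A).mp hA
  have hB' := (isUnit_iff_isUnit_det B).mp hB
  have hAB' : IsUnit (A * B).det := (isUnit_iff_isUnit_det _).mp (hA.mul hB)
  have hconj : A * B * (A⁻¹ * A⁻¹ - B⁻¹ * B⁻¹) * (A * B) = B * B - A * A := by
    calc A * B * (A⁻¹ * A⁻¹ - B⁻¹ * B⁻¹) * (A * B)
        = B * A * (A⁻¹ * A⁻¹) * (A * B) - A * B * (B⁻¹ * B⁻¹) * (B * A) := by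
          rw [Matrix.mul_sub, Matrix.sub_mul, hAB.eq]
      _ = B * B - A * A := by
          simp only [Matrix.mul_assoc, nonsing_inv_mul_cancel_left _ _ hA',
            nonsing_inv_mul_cancel_left _ _ hB', mul_nonsing_inv_cancel_left _ _ hA',
            mul_nonsing_inv_cancel_left _ _ hB']
  rw [← hconj, Matrix.mul_assoc (A * B), nonsing_inv_mul_cancel_left _ _ hAB', Matrix.mul_assoc,
    mul_nonsing_inv _ hAB', Matrix.mul_one]

theorem conjTranspose_mul_self_add_smul_eq [StarRing R] {P : Matrix n n R} (hP : IsUnit P)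
    (G : Matrix n n R) (c : R) :
    Pᴴ * P + c • G = Pᴴ * (1 + c • ((P⁻¹)ᴴ * G * P⁻¹)) * P := by
  have hP' := (isUnit_iff_isUnit_det P).mp hP
  have hPPinv : Pᴴ * (P⁻¹)ᴴ = 1 := by
    rw [← conjTranspose_mul, nonsing_inv_mul _ hP', conjTranspose_one]
  simp only [Matrix.mul_add, Matrix.add_mul, Matrix.mul_one, Matrix.mul_smul,
    Matrix.smul_mul, ← Matrix.mul_assoc, hPPinv, Matrix.one_mul]
  rw [Matrix.mul_assoc, nonsing_inv_mul _ hP', Matrix.mul_one]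

end CommRing

section RCLike

variable {𝕜 : Type*} [RCLike 𝕜]

theorem PosDef.exists_eq_conjTranspose_mul_self {A : Matrix n n 𝕜} (hA : A.PosDef) :
    ∃ R : Matrix n n 𝕜, IsUnit R ∧ A = Rᴴ * R := by
  open scoped MatrixOrder in
  have hR : (CFC.sqrt A).PosDef := hA.isStrictlyPositive.sqrt.posDef
  refine ⟨CFC.sqrt A, hR.isUnit, ?_⟩
  rw [hR.isHermitian.eq, CFC.sqrt_mul_sqrt_self A hA.posSemidef.nonneg]

theorem PosDef.trace_mul_pos [Nonempty n] {A B : Matrix n n 𝕜} (hA : A.PosDef) (hB : B.PosDef) :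
    0 < trace (A * B) := by
  obtain ⟨R, hR, rfl⟩ := hB.exists_eq_conjTranspose_mul_self
  rw [← Matrix.mul_assoc, trace_mul_cycle]
  exact (hA.mul_mul_conjTranspose_same (vecMul_injective_iff_isUnit.mpr hR)).trace_pos

theorem PosDef.inv_mul_inv_sub_of_commute {A B : Matrix n n 𝕜} (hA : A.PosDef) (hB : B.PosDef)
    (hAB : Commute A B) (h : (B * B - A * A).PosDef) : (A⁻¹ * A⁻¹ - B⁻¹ * B⁻¹).PosDef := by
  have hsymm : ((A * B)⁻¹)ᴴ = (A * B)⁻¹ := by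
    rw [conjTranspose_nonsing_inv, conjTranspose_mul, hA.isHermitian.eq, hB.isHermitian.eq, hAB.eq]
  rw [← inv_mul_sub_mul_inv_of_commute hA.isUnit hB.isUnit hAB]
  simpa only [hsymm] using h.conjTranspose_mul_mul_same
    (mulVec_injective_iff_isUnit.mpr (isUnit_nonsing_inv_iff.mpr (hA.isUnit.mul hB.isUnit)))

theorem PosDef.one_add_smul_inv_mul_inv_sub {H : Matrix n n 𝕜} (hH : H.PosDef) {a b : ℝ}
    (ha : 0 ≤ a) (hab : a < b) :
    ((1 + a • H)⁻¹ * (1 + a • H)⁻¹ - (1 + b • H)⁻¹ * (1 + b • H)⁻¹).PosDef := by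
  have hT (c : ℝ) (hc : 0 ≤ c) : (1 + c • H).PosDef :=
    PosDef.one.add_posSemidef (hH.posSemidef.smul hc)
  have hcomm : Commute (1 + a • H) (1 + b • H) :=
    (Commute.one_left _).add_left
      ((Commute.one_right _).add_right ((Commute.refl H).smul_left a |>.smul_right b))
  have hHH : (H * H).PosDef := by
    simpa only [hH.isHermitian.eq] using
      PosDef.conjTranspose_mul_self H (mulVec_injective_iff_isUnit.mpr hH.isUnit)
  have hdiff : (1 + b • H) * (1 + b • H) - (1 + a • H) * (1 + a • H)
      = (b ^ 2 - a ^ 2) • (H * H) + (2 * (b - a)) • H := by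
    simp only [Matrix.mul_add, Matrix.add_mul, Matrix.mul_one, Matrix.one_mul, Matrix.mul_smul,
      Matrix.smul_mul]
    module
  refine (hT a ha).inv_mul_inv_sub_of_commute (hT b (ha.trans hab.le)) hcomm ?_
  rw [hdiff]
  exact (hHH.smul (by nlinarith)).add (hH.smul (by linarith))

end RCLike

end Matrix

/-- The variance term `v(λ) = trace((G₂ + λG₁)⁻² G₂)` (with `M⁻² = (M⁻¹)ᵀ M⁻¹`) is strictly
decreasing in the dial parameter `λ` on `[0, ∞)`. -/
theorem variance_term_strictAnti
    (p : ℕ) (hp : 1 ≤ p) (G₁ G₂ : Matrix (Fin p) (Fin p) ℝ)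
    (hG₁ : G₁.PosDef) (hG₂ : G₂.PosDef) :
    ∀ l₁ l₂ : ℝ, 0 ≤ l₁ → l₁ < l₂ →
      Matrix.trace (((G₂ + l₂ • G₁)⁻¹)ᵀ * (G₂ + l₂ • G₁)⁻¹ * G₂)
        < Matrix.trace (((G₂ + l₁ • G₁)⁻¹)ᵀ * (G₂ + l₁ • G₁)⁻¹ * G₂) := by
  intro l₁ l₂ hl₁ hl
  have : Nonempty (Fin p) := ⟨⟨0, hp⟩⟩
  obtain ⟨R, hR, rfl⟩ := hG₂.exists_eq_conjTranspose_mul_self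
  set H := (R⁻¹)ᴴ * G₁ * R⁻¹
  have hH : H.PosDef := hG₁.conjTranspose_mul_mul_same
    (mulVec_injective_iff_isUnit.mpr (isUnit_nonsing_inv_iff.mpr hR))
  have hv (l : ℝ) : trace (((Rᴴ * R + l • G₁)⁻¹)ᵀ * (Rᴴ * R + l • G₁)⁻¹ * (Rᴴ * R))
      = trace ((1 + l • H)⁻¹ * (1 + l • H)⁻¹ * (R * Rᴴ)⁻¹) := by
    have hsymm : (Rᴴ * R + l • G₁)ᵀ = Rᴴ * R + l • G₁ := by
      simp [← conjTranspose_eq_transpose_of_trivial, hG₁.isHermitian.eq]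
    rw [transpose_nonsing_inv, hsymm, conjTranspose_mul_self_add_smul_eq hR]
    exact trace_inv_mul_inv_mul_of_conj _ hR.star hR
  rw [hv, hv, ← sub_pos, ← trace_sub, ← Matrix.sub_mul]
  exact (hH.one_add_smul_inv_mul_inv_sub hl₁ hl).trace_mul_pos
    (PosDef.mul_conjTranspose_self R (vecMul_injective_iff_isUnit.mpr hR)).inv
end

section
/- Let p ≥ 1 and let G₁ and G₂ be symmetric positive definite p×p real matrices. Let g₁ ≤ g₂ ≤ … ≤ g_p be the eigenvalues of G₂ (with multiplicity) listed in increasing order and let κ₁ ≥ κ₂ ≥ … ≥ κ_p be the eigenvalues of G₂^{1/2}G₁⁻¹G₂^{1/2} (with multiplicity) listed in decreasing order, where G₂^{1/2} is the symmetric positive definite square root of G₂. Then for every λ ≥ 0, trace((G₂ + λG₁)⁻²G₂) ≤ Σ_{r=1}^{p} κ_r² / (g_r (κ_r + λ)²). -/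
open Matrix Polynomial

/-!
Let `G₂ = U diag(g) Uᵀ` and `G₂^{1/2} G₁⁻¹ G₂^{1/2} = V diag(κ) Vᵀ` with `U`, `V` orthogonal. The
congruence `T = Vᵀ G₂^{1/2}` diagonalises both matrices at once: `G₂ = TᵀT` and
`G₁ = Tᵀ diag(κ⁻¹) T`, so `S(λ) = Tᵀ diag(1 + λκ⁻¹) T` and
`trace(S(λ)⁻² G₂) = trace(diag(x) Q diag(g⁻¹) Qᵀ)` with `x = (κ / (κ + λ))²` and `Q = VᵀU`.
For orthogonal `Q` the matrix `Q ⊙ Q` of squared entries is doubly stochastic, hence by Birkhoff's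
theorem a convex combination of permutation matrices; so the trace is a convex combination of sums
`∑ x_r g_{σ r}⁻¹`, each at most `∑ x_r g_r⁻¹` by the rearrangement inequality, since `x` and `g⁻¹`
are both antitone.
-/

lemma exists_perm_comp_eq_of_map_univ_val_eq {ι α : Type*} [Fintype ι] [DecidableEq α]
    {f g : ι → α} (h : Finset.univ.val.map f = Finset.univ.val.map g) :
    ∃ σ : Equiv.Perm ι, f ∘ σ = g := by
  classical
  refine ⟨Equiv.ofFiberEquiv (f := g) (g := f) fun c => Fintype.equivOfCardEq ?_,
    funext (Equiv.ofFiberEquiv_map _)⟩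
  simpa [Multiset.count_map, Fintype.card_subtype, eq_comm, Finset.card_def, Finset.filter_val]
    using (congrArg (Multiset.count c) h).symm

lemma Polynomial.roots_prod_univ_X_sub_C {ι R : Type*} [Fintype ι] [CommRing R] [IsDomain R]
    (f : ι → R) : (∏ i, (X - C (f i))).roots = Finset.univ.val.map f := by
  rw [roots_prod _ _ (Finset.prod_ne_zero_iff.2 fun i _ => X_sub_C_ne_zero (f i))]
  simp

lemma antitone_inv_one_add_smul_inv_mul_self {ι K : Type*} [Preorder ι] [Field K] [LinearOrder K]
    [IsStrictOrderedRing K] {κ : ι → K}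
    (hκ : Antitone κ) (hκ₀ : ∀ i, 0 < κ i) {l : K} (hl : 0 ≤ l) :
    Antitone ((1 + l • κ⁻¹)⁻¹ * (1 + l • κ⁻¹)⁻¹) := by
  intro i j hij
  have := hκ₀ i
  have := hκ₀ j
  have := hκ hij
  simp only [Pi.mul_apply, Pi.add_apply, Pi.one_apply, Pi.smul_apply, Pi.inv_apply, smul_eq_mul]
  gcongr

namespace Matrix

variable {n : Type*} [Fintype n] [DecidableEq n]

section CommRing

variable {R : Type*} [CommRing R]

lemma transpose_mem_orthogonalGroup {Q : Matrix n n R} (hQ : Q ∈ orthogonalGroup n R) :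
    Qᵀ ∈ orthogonalGroup n R :=
  (mem_orthogonalGroup_iff n R).2 <| by
    rw [transpose_transpose]; exact (mem_orthogonalGroup_iff' n R).1 hQ

lemma isUnit_of_mem_orthogonalGroup {Q : Matrix n n R} (hQ : Q ∈ orthogonalGroup n R) :
    IsUnit Q :=
  (isUnit_iff_isUnit_det Q).2 (isUnit_det_of_right_inverse ((mem_orthogonalGroup_iff n R).1 hQ))

lemma inv_mul_mul_transpose_of_mem_orthogonalGroup {Q : Matrix n n R}
    (hQ : Q ∈ orthogonalGroup n R) (M : Matrix n n R) : (Q * M * Qᵀ)⁻¹ = Q * M⁻¹ * Qᵀ := by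
  rw [mul_inv_rev, mul_inv_rev, inv_eq_left_inv ((mem_orthogonalGroup_iff n R).1 hQ),
    inv_eq_left_inv ((mem_orthogonalGroup_iff' n R).1 hQ), Matrix.mul_assoc]

lemma trace_transpose_inv_mul_inv_mul_transpose_mul_self {T D : Matrix n n R} (hT : IsUnit T)
    (hD : Dᵀ = D) :
    trace (((Tᵀ * D * T)⁻¹)ᵀ * (Tᵀ * D * T)⁻¹ * (Tᵀ * T)) = trace (D⁻¹ * D⁻¹ * (T * Tᵀ)⁻¹) := by
  have hT' : IsUnit T.det := (isUnit_iff_isUnit_det T).1 hT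
  have hTt : Tᵀ⁻¹ * Tᵀ = 1 := nonsing_inv_mul _ (by rwa [det_transpose])
  simp only [mul_inv_rev, transpose_mul, transpose_nonsing_inv, transpose_transpose, hD]
  have hcancel : T⁻¹ * D⁻¹ * Tᵀ⁻¹ * (T⁻¹ * (D⁻¹ * Tᵀ⁻¹)) * (Tᵀ * T)
      = T⁻¹ * (D⁻¹ * (Tᵀ⁻¹ * T⁻¹) * D⁻¹) * T := by
    simp only [Matrix.mul_assoc]
    rw [← Matrix.mul_assoc Tᵀ⁻¹ Tᵀ, hTt, Matrix.one_mul]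
  rw [hcancel, trace_mul_cycle, mul_nonsing_inv T hT', Matrix.one_mul, trace_mul_cycle]

lemma trace_diagonal_mul_conj_diagonal (Q : Matrix n n R) (x y : n → R) :
    trace (diagonal x * (Q * diagonal y * Qᵀ)) = x ⬝ᵥ ((Q ⊙ Q) *ᵥ y) := by
  simp only [trace, diag, diagonal_mul]
  simp only [mul_apply, diagonal_apply, mul_ite, mul_zero, Finset.sum_ite_eq', Finset.mem_univ,
    if_true, transpose_apply, dotProduct, mulVec, hadamard_apply, Finset.mul_sum]
  exact Finset.sum_congr rfl fun i _ => Finset.sum_congr rfl fun j _ => by ring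

lemma mul_self_eq_transpose_mul_self {A V : Matrix n n R} (hAt : Aᵀ = A)
    (hV : V ∈ orthogonalGroup n R) : A * A = (Vᵀ * A)ᵀ * (Vᵀ * A) := by
  rw [transpose_mul, transpose_transpose, hAt, Matrix.mul_assoc, ← Matrix.mul_assoc V,
    (mem_orthogonalGroup_iff n R).1 hV, Matrix.one_mul]

end CommRing

section Field

variable {K : Type*} [Field K]

lemma inv_diagonal_of_ne_zero {v : n → K} (hv : ∀ i, v i ≠ 0) :
    (diagonal v)⁻¹ = diagonal v⁻¹ :=
  inv_eq_left_inv <| by rw [diagonal_mul_diagonal, ← diagonal_one]; simp [hv]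

lemma eq_transpose_mul_diagonal_inv_mul_of_mul_inv_mul_eq {A B V : Matrix n n K} {d : n → K}
    (hA : IsUnit A) (hAt : Aᵀ = A) (hB : IsUnit B) (hV : V ∈ orthogonalGroup n K)
    (hd : ∀ i, d i ≠ 0) (h : A * B⁻¹ * A = V * diagonal d * Vᵀ) :
    B = (Vᵀ * A)ᵀ * diagonal d⁻¹ * (Vᵀ * A) := by
  have hA' : IsUnit A.det := (isUnit_iff_isUnit_det A).1 hA
  have hBinv : B⁻¹ = A⁻¹ * (V * diagonal d * Vᵀ) * A⁻¹ := by
    rw [← h, Matrix.mul_assoc, Matrix.mul_assoc, mul_nonsing_inv A hA', Matrix.mul_one,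
      ← Matrix.mul_assoc, nonsing_inv_mul A hA', Matrix.one_mul]
  calc B = B⁻¹⁻¹ := (nonsing_inv_nonsing_inv B ((isUnit_iff_isUnit_det B).1 hB)).symm
    _ = A * (V * diagonal d * Vᵀ)⁻¹ * A := by
      rw [hBinv, mul_inv_rev, mul_inv_rev, nonsing_inv_nonsing_inv A hA']
      simp only [Matrix.mul_assoc]
    _ = (Vᵀ * A)ᵀ * diagonal d⁻¹ * (Vᵀ * A) := by
      rw [inv_mul_mul_transpose_of_mem_orthogonalGroup hV, inv_diagonal_of_ne_zero hd,
        transpose_mul, transpose_transpose, hAt]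
      simp only [Matrix.mul_assoc]

lemma mul_self_add_smul_eq_transpose_mul_diagonal_mul {A B V : Matrix n n K} {d : n → K}
    (hA : IsUnit A) (hAt : Aᵀ = A) (hB : IsUnit B) (hV : V ∈ orthogonalGroup n K)
    (hd : ∀ i, d i ≠ 0) (h : A * B⁻¹ * A = V * diagonal d * Vᵀ) (l : K) :
    A * A + l • B = (Vᵀ * A)ᵀ * diagonal (1 + l • d⁻¹) * (Vᵀ * A) := by
  have hdiag : diagonal (1 + l • d⁻¹) = 1 + l • diagonal d⁻¹ := by
    rw [← diagonal_one, ← diagonal_smul, diagonal_add]; rfl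
  rw [mul_self_eq_transpose_mul_self hAt hV,
    eq_transpose_mul_diagonal_inv_mul_of_mul_inv_mul_eq hA hAt hB hV hd h, hdiag]
  simp only [Matrix.mul_add, Matrix.add_mul, Matrix.mul_one, Matrix.mul_smul, Matrix.smul_mul]

end Field

section LinearOrderedField

variable {K : Type*} [Field K] [LinearOrder K] [IsStrictOrderedRing K]

lemma dotProduct_mulVec_le_of_mem_doublyStochastic {M : Matrix n n K}
    (hM : M ∈ doublyStochastic K n) {x y : n → K} (hxy : Monovary x y) :
    x ⬝ᵥ (M *ᵥ y) ≤ x ⬝ᵥ y := by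
  rw [← SetLike.mem_coe, doublyStochastic_eq_convexHull_permMatrix] at hM
  refine convexHull_min (t := {M | x ⬝ᵥ (M *ᵥ y) ≤ x ⬝ᵥ y}) ?_ (convex_halfSpace_le ?_ _) hM
  · rintro _ ⟨σ, rfl⟩
    simpa [permMatrix_mulVec, dotProduct] using hxy.sum_mul_comp_perm_le_sum_mul (σ := σ)
  · exact ⟨fun M N => by simp [add_mulVec, dotProduct_add],
      fun c M => by simp [smul_mulVec, dotProduct_smul]⟩

lemma hadamard_self_mem_doublyStochastic {Q : Matrix n n K} (hQ : Q ∈ orthogonalGroup n K) :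
    Q ⊙ Q ∈ doublyStochastic K n := by
  refine mem_doublyStochastic_iff_sum.2
    ⟨fun i j => mul_self_nonneg (Q i j), fun i => ?_, fun j => ?_⟩
  · simpa [mul_apply] using congrFun₂ ((mem_orthogonalGroup_iff n K).1 hQ) i i
  · simpa [mul_apply] using congrFun₂ ((mem_orthogonalGroup_iff' n K).1 hQ) j j

theorem trace_diagonal_mul_conj_diagonal_le {Q : Matrix n n K} (hQ : Q ∈ orthogonalGroup n K)
    {x y : n → K} (hxy : Monovary x y) :
    trace (diagonal x * (Q * diagonal y * Qᵀ)) ≤ ∑ i, x i * y i := by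
  rw [trace_diagonal_mul_conj_diagonal]
  exact dotProduct_mulVec_le_of_mem_doublyStochastic (hadamard_self_mem_doublyStochastic hQ) hxy

theorem trace_inv_transpose_mul_inv_mul_le_sum {ι : Type*} [Fintype ι] [LinearOrder ι]
    {A B U V : Matrix ι ι K} {g κ : ι → K}
    (hA : IsUnit A) (hAt : Aᵀ = A) (hB : IsUnit B)
    (hU : U ∈ orthogonalGroup ι K) (hV : V ∈ orthogonalGroup ι K)
    (hAA : A * A = U * diagonal g * Uᵀ) (hABA : A * B⁻¹ * A = V * diagonal κ * Vᵀ)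
    (hg : Monotone g) (hg₀ : ∀ i, 0 < g i) (hκ : Antitone κ) (hκ₀ : ∀ i, 0 < κ i)
    {l : K} (hl : 0 ≤ l) :
    trace (((A * A + l • B)⁻¹)ᵀ * (A * A + l • B)⁻¹ * (A * A))
      ≤ ∑ i, κ i ^ 2 / (g i * (κ i + l) ^ 2) := by
  have hVt : Vᵀ ∈ orthogonalGroup ι K := transpose_mem_orthogonalGroup hV
  have hT : IsUnit (Vᵀ * A) := (isUnit_of_mem_orthogonalGroup hVt).mul hA
  have hTT : Vᵀ * A * (Vᵀ * A)ᵀ = Vᵀ * U * diagonal g * (Vᵀ * U)ᵀ := by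
    simp only [transpose_mul, transpose_transpose, hAt, Matrix.mul_assoc]
    rw [← Matrix.mul_assoc A, hAA]
    simp only [Matrix.mul_assoc]
  have hc : ∀ i, 0 < (1 + l • κ⁻¹) i := fun i => by
    have := hκ₀ i
    simp only [Pi.add_apply, Pi.one_apply, Pi.smul_apply, Pi.inv_apply, smul_eq_mul]
    positivity
  rw [mul_self_add_smul_eq_transpose_mul_diagonal_mul hA hAt hB hV (fun i => (hκ₀ i).ne') hABA,
    mul_self_eq_transpose_mul_self hAt hV,
    trace_transpose_inv_mul_inv_mul_transpose_mul_self hT (diagonal_transpose _), hTT,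
    inv_mul_mul_transpose_of_mem_orthogonalGroup (mul_mem hVt hU),
    inv_diagonal_of_ne_zero fun i => (hg₀ i).ne', inv_diagonal_of_ne_zero fun i => (hc i).ne',
    diagonal_mul_diagonal]
  refine (trace_diagonal_mul_conj_diagonal_le (mul_mem hVt hU)
    (Antitone.monovary (antitone_inv_one_add_smul_inv_mul_self hκ hκ₀ hl)
      fun i j hij => inv_anti₀ (hg₀ i) (hg hij))).trans_eq (Finset.sum_congr rfl fun i _ => ?_)
  have := hκ₀ i
  have := hg₀ i
  simp only [Pi.mul_apply, Pi.add_apply, Pi.one_apply, Pi.smul_apply, Pi.inv_apply, smul_eq_mul]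
  field_simp

end LinearOrderedField

section Real

lemma IsHermitian.exists_perm_eigenvalues_comp_eq {A : Matrix n n ℝ} (hA : A.IsHermitian)
    {a : n → ℝ} (h : A.charpoly = ∏ i, (X - C (a i))) :
    ∃ σ : Equiv.Perm n, hA.eigenvalues ∘ σ = a :=
  exists_perm_comp_eq_of_map_univ_val_eq <| by
    rw [← roots_prod_univ_X_sub_C, ← roots_prod_univ_X_sub_C, ← h, hA.charpoly_eq]
    simp

lemma PosDef.pos_of_charpoly_eq_prod {A : Matrix n n ℝ} (hA : A.PosDef)
    {a : n → ℝ} (h : A.charpoly = ∏ i, (X - C (a i))) (i : n) : 0 < a i := by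
  obtain ⟨σ, rfl⟩ := hA.isHermitian.exists_perm_eigenvalues_comp_eq h
  exact hA.eigenvalues_pos (σ i)

lemma IsHermitian.exists_mem_orthogonalGroup_eq_mul_diagonal_mul_transpose
    {A : Matrix n n ℝ} (hA : A.IsHermitian) {a : n → ℝ} (h : A.charpoly = ∏ i, (X - C (a i))) :
    ∃ U ∈ orthogonalGroup n ℝ, A = U * diagonal a * Uᵀ := by
  obtain ⟨σ, rfl⟩ := hA.exists_perm_eigenvalues_comp_eq h
  set U : Matrix n n ℝ := ↑hA.eigenvectorUnitary
  have hU : U ∈ orthogonalGroup n ℝ := hA.eigenvectorUnitary.2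
  refine ⟨U.submatrix id σ, ?_, ?_⟩
  · rw [mem_orthogonalGroup_iff'] at hU ⊢
    rw [transpose_submatrix, ← submatrix_mul _ _ _ _ _ Function.bijective_id, hU,
      submatrix_one_equiv]
  · conv_lhs => rw [hA.spectral_theorem]
    rw [← submatrix_diagonal_equiv, submatrix_mul_equiv, transpose_submatrix,
      submatrix_mul_equiv, submatrix_id_id]
    simp [U, Unitary.conjStarAlgAut_apply, star_eq_conjTranspose]

end Real

end Matrix

theorem variance_term_vonNeumann_bound_general
    (p : ℕ) (G₁ G₂ : Matrix (Fin p) (Fin p) ℝ)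
    (hG₁ : G₁.PosDef) (hG₂ : G₂.PosDef)
    (G₂half : Matrix (Fin p) (Fin p) ℝ) (hhalf : G₂half.PosDef)
    (hsq : G₂half * G₂half = G₂)
    (g κ : Fin p → ℝ)
    (hgmono : Monotone g)
    (hgeig : G₂.charpoly = ∏ r : Fin p, (Polynomial.X - Polynomial.C (g r)))
    (hκanti : Antitone κ)
    (hκeig : (G₂half * G₁⁻¹ * G₂half).charpoly
      = ∏ r : Fin p, (Polynomial.X - Polynomial.C (κ r))) :
    ∀ l : ℝ, 0 ≤ l →
      Matrix.trace (((G₂ + l • G₁)⁻¹)ᵀ * (G₂ + l • G₁)⁻¹ * G₂)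
        ≤ ∑ r : Fin p, κ r ^ 2 / (g r * (κ r + l) ^ 2) := by
  intro l hl
  subst hsq
  have hAt : G₂halfᵀ = G₂half := by simpa using hhalf.isHermitian.eq
  have hK : (G₂half * G₁⁻¹ * G₂half).PosDef := by
    simpa [hAt] using
      hG₁.inv.conjTranspose_mul_mul_same (mulVec_injective_iff_isUnit.2 hhalf.isUnit)
  obtain ⟨U, hU, hG₂U⟩ :=
    hG₂.isHermitian.exists_mem_orthogonalGroup_eq_mul_diagonal_mul_transpose hgeig
  obtain ⟨V, hV, hKV⟩ :=
    hK.isHermitian.exists_mem_orthogonalGroup_eq_mul_diagonal_mul_transpose hκeig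
  exact trace_inv_transpose_mul_inv_mul_le_sum hhalf.isUnit hAt hG₁.isUnit hU hV hG₂U hKV
    hgmono (hG₂.pos_of_charpoly_eq_prod hgeig) hκanti (hK.pos_of_charpoly_eq_prod hκeig) hl

/-- Von Neumann trace-inequality upper bound on the variance term: if `g` lists the eigenvalues
of `G₂` (with multiplicity) in increasing order and `κ` lists the eigenvalues of
`G₂^{1/2} G₁⁻¹ G₂^{1/2}` (with multiplicity) in decreasing order, then for every `λ ≥ 0`,
`trace((G₂ + λG₁)⁻² G₂) ≤ Σ_r κ_r² / (g_r (κ_r + λ)²)` (with `M⁻² = (M⁻¹)ᵀ M⁻¹`). -/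
theorem variance_term_vonNeumann_bound
    (p : ℕ) (hp : 1 ≤ p) (G₁ G₂ : Matrix (Fin p) (Fin p) ℝ)
    (hG₁ : G₁.PosDef) (hG₂ : G₂.PosDef)
    (G₂half : Matrix (Fin p) (Fin p) ℝ) (hhalf : G₂half.PosDef)
    (hsq : G₂half * G₂half = G₂)
    (g κ : Fin p → ℝ)
    (hgmono : Monotone g)
    (hgeig : G₂.charpoly = ∏ r : Fin p, (Polynomial.X - Polynomial.C (g r)))
    (hκanti : Antitone κ)
    (hκeig : (G₂half * G₁⁻¹ * G₂half).charpoly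
      = ∏ r : Fin p, (Polynomial.X - Polynomial.C (κ r))) :
    ∀ l : ℝ, 0 ≤ l →
      Matrix.trace (((G₂ + l • G₁)⁻¹)ᵀ * (G₂ + l • G₁)⁻¹ * G₂)
        ≤ ∑ r : Fin p, κ r ^ 2 / (g r * (κ r + l) ^ 2) :=
  variance_term_vonNeumann_bound_general p G₁ G₂ hG₁ hG₂ G₂half hhalf hsq g κ hgmono hgeig hκanti
    hκeig
end

section
/- Let p ≥ 1 and let κ_r > 0, a_r > 0 and d_r ≥ 0 for r = 1, …, p with max_r d_r > 0, and let σ² > 0 and n > 0 be real numbers. Define U(λ) = Σ_{r=1}^{p} (σ² a_r κ_r² + n λ² d_r) / (n (κ_r + λ)²) for λ ≥ 0 and set λ₀ = (σ²/n) · (min_{r} κ_r a_r) / (max_{r} d_r). Then U is strictly decreasing on [0, λ₀]; in particular U(λ) < U(0) = (σ²/n) Σ_{r=1}^{p} a_r for every λ ∈ (0, λ₀]. -/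
/-! Each summand of `U` has the form `(b κ² + c λ²) / (κ + λ)²` with `b = σ² a / n` and `c = d`,
and a one-line computation gives

  `(b κ² + c x²)(κ + y)² - (b κ² + c y²)(κ + x)² = (y - x) κ ((b κ - c x)(κ + y) + (b κ - c y)(κ + x))`,

so the summand strictly decreases as long as `c λ ≤ b κ`. Below `λ₀` this holds for every `r`
at once, because `d_r λ ≤ (max d) λ₀ = (σ²/n) min (κ a) ≤ σ² a_r κ_r / n`. -/

open Finset

theorem Finset.strictAntiOn_sum {ι α M : Type*} [Preorder α] [AddCommMonoid M] [PartialOrder M]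
    [IsOrderedCancelAddMonoid M] {s : Finset ι} (hs : s.Nonempty) {f : ι → α → M} {S : Set α}
    (hf : ∀ i ∈ s, StrictAntiOn (f i) S) :
    StrictAntiOn (fun x => ∑ i ∈ s, f i x) S :=
  fun _ hx _ hy hxy => sum_lt_sum_of_nonempty hs fun i hi => hf i hi hx hy hxy

lemma shrinkage_term_strictAntiOn {b c κ : ℝ} (hb : 0 < b) (hc : 0 ≤ c) (hκ : 0 < κ) :
    StrictAntiOn (fun l => (b * κ ^ 2 + c * l ^ 2) / (κ + l) ^ 2) {l | 0 ≤ l ∧ c * l ≤ b * κ} := by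
  rintro x ⟨hx, -⟩ y ⟨hy, hcy⟩ hxy
  have hcx : c * x < b * κ := by
    rcases hc.eq_or_lt with rfl | hc
    · simpa using mul_pos hb hκ
    · exact (mul_lt_mul_of_pos_left hxy hc).trans_le hcy
  have hcross : (b * κ ^ 2 + c * x ^ 2) * (κ + y) ^ 2 - (b * κ ^ 2 + c * y ^ 2) * (κ + x) ^ 2 =
      (y - x) * κ * ((b * κ - c * x) * (κ + y) + (b * κ - c * y) * (κ + x)) := by ring
  have hpos : 0 < (y - x) * κ * ((b * κ - c * x) * (κ + y) + (b * κ - c * y) * (κ + x)) := by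
    have := mul_nonneg (sub_nonneg.2 hcy) (add_pos_of_pos_of_nonneg hκ hx).le
    have := mul_pos (sub_pos.2 hcx) (add_pos_of_pos_of_nonneg hκ hy)
    have := sub_pos.2 hxy
    positivity
  rw [div_lt_div_iff₀ (by positivity) (by positivity)]
  linarith

theorem mse_upper_bound_strictAntiOn_general
    (p : ℕ) (κ a d : Fin p → ℝ)
    (hκ : ∀ r, 0 < κ r) (ha : ∀ r, 0 < a r) (hd : ∀ r, 0 ≤ d r)
    (σ2 n : ℝ) (hσ2 : 0 < σ2) (hn : 0 < n)
    (mn mx : ℝ)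
    (hmn : IsLeast (Set.range fun r => κ r * a r) mn)
    (hmx : IsGreatest (Set.range d) mx) (hmxpos : 0 < mx)
    (U : ℝ → ℝ)
    (hU : ∀ l : ℝ, U l =
      ∑ r : Fin p, (σ2 * a r * κ r ^ 2 + n * l ^ 2 * d r) / (n * (κ r + l) ^ 2))
    (lam₀ : ℝ) (hlam₀ : lam₀ = σ2 / n * (mn / mx)) :
    StrictAntiOn U (Set.Icc 0 lam₀) ∧
      (∀ l ∈ Set.Ioc 0 lam₀, U l < U 0) ∧
      U 0 = σ2 / n * ∑ r : Fin p, a r := by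
  obtain ⟨r₀, -⟩ := hmx.1
  have hU_terms : U = fun l => ∑ r, (σ2 * a r / n * κ r ^ 2 + d r * l ^ 2) / (κ r + l) ^ 2 := by
    funext l
    rw [hU]
    refine sum_congr rfl fun r _ => ?_
    rw [← div_div]
    congr 1
    field_simp
  have hanti : StrictAntiOn U (Set.Icc 0 lam₀) := by
    rw [hU_terms]
    refine strictAntiOn_sum ⟨r₀, mem_univ _⟩ fun r _ => ?_
    refine (shrinkage_term_strictAntiOn (by have := ha r; positivity) (hd r) (hκ r)).mono ?_
    rintro l ⟨hl₀, hl⟩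
    refine ⟨hl₀, ?_⟩
    calc d r * l ≤ mx * l := mul_le_mul_of_nonneg_right (hmx.2 ⟨r, rfl⟩) hl₀
      _ ≤ mx * lam₀ := mul_le_mul_of_nonneg_left hl hmxpos.le
      _ = σ2 / n * mn := by rw [hlam₀]; field_simp
      _ ≤ σ2 / n * (κ r * a r) := mul_le_mul_of_nonneg_left (hmn.2 ⟨r, rfl⟩) (by positivity)
      _ = σ2 * a r / n * κ r := by ring
  refine ⟨hanti, fun l hl => hanti ⟨le_rfl, hl.1.le.trans hl.2⟩ ⟨hl.1.le, hl.2⟩ hl.1, ?_⟩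
  rw [hU_terms, mul_sum]
  refine sum_congr rfl fun r _ => ?_
  have := (hκ r).ne'
  rw [zero_pow two_ne_zero, mul_zero, add_zero, add_zero]
  field_simp

/-- The mean-squared-error upper bound
`U(λ) = Σ_r (σ² a_r κ_r² + n λ² d_r)/(n (κ_r + λ)²)` is strictly decreasing on `[0, λ₀]` with
`λ₀ = (σ²/n)·(min_r κ_r a_r)/(max_r d_r)`; in particular `U(λ) < U(0) = (σ²/n) Σ_r a_r` for all
`λ ∈ (0, λ₀]`. -/
theorem mse_upper_bound_strictAntiOn
    (p : ℕ) (hp : 1 ≤ p) (κ a d : Fin p → ℝ)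
    (hκ : ∀ r, 0 < κ r) (ha : ∀ r, 0 < a r) (hd : ∀ r, 0 ≤ d r)
    (σ2 n : ℝ) (hσ2 : 0 < σ2) (hn : 0 < n)
    (mn mx : ℝ)
    (hmn : IsLeast (Set.range fun r => κ r * a r) mn)
    (hmx : IsGreatest (Set.range d) mx) (hmxpos : 0 < mx)
    (U : ℝ → ℝ)
    (hU : ∀ l : ℝ, U l =
      ∑ r : Fin p, (σ2 * a r * κ r ^ 2 + n * l ^ 2 * d r) / (n * (κ r + l) ^ 2))
    (lam₀ : ℝ) (hlam₀ : lam₀ = σ2 / n * (mn / mx)) :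
    StrictAntiOn U (Set.Icc 0 lam₀) ∧
      (∀ l ∈ Set.Ioc 0 lam₀, U l < U 0) ∧
      U 0 = σ2 / n * ∑ r : Fin p, a r :=
  mse_upper_bound_strictAntiOn_general p κ a d hκ ha hd σ2 n hσ2 hn mn mx hmn hmx hmxpos U hU lam₀
    hlam₀
end
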